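/- arXiv:2510.03332 — 7 statements merged into one kernel-verified Lean document; each statement's English description precedes it below -/
import Mathlib

section
/- On a star-shaped market with numéraire asset 1, let q = (q₁,…,q_N) with q₁ = 1 and 0 < q_i ≤ P^a_i for all i, where all ask prices satisfy P^a_i > 0 and P^a_1 = 1. Let ν = (ν₁,…,ν_N) be a probability vector. Then the linear system (diag q + ν·(P^a − q)ᵀ)·z = ν admits a solution z ≥ 0. -/
/-- On a star-shaped market with numéraire asset 1 (`q 0 = Pa 0 = 1`,
`0 < q i ≤ Pa i`), for any probability vector `ν` the linear system
`(diag q + ν (Pa - q)ᵀ) z = ν` admits a componentwise nonnegative solution. -/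
theorem exists_nonneg_solution_star_market
    (N : ℕ) (hN : 0 < N) (q Pa ν : Fin N → ℝ)
    (hq1 : q ⟨0, hN⟩ = 1) (hPa1 : Pa ⟨0, hN⟩ = 1)
    (hqpos : ∀ i, 0 < q i) (hPapos : ∀ i, 0 < Pa i) (hqPa : ∀ i, q i ≤ Pa i)
    (hν : ∀ i, 0 ≤ ν i) (hνsum : ∑ i, ν i = 1) :
    ∃ z : Fin N → ℝ, (∀ i, 0 ≤ z i) ∧
      ∀ i, q i * z i + ν i * ∑ j, (Pa j - q j) * z j = ν i := by
  set c : ℝ := ∑ j, (Pa j - q j) * (ν j / q j) with hc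
  have hc0 : 0 ≤ c := Finset.sum_nonneg fun j _ =>
    mul_nonneg (sub_nonneg.2 (hqPa j)) (div_nonneg (hν j) (hqpos j).le)
  have h1c : (0:ℝ) < 1 + c := by linarith
  refine ⟨fun i => ν i / (q i * (1 + c)), fun i =>
    div_nonneg (hν i) (mul_nonneg (hqpos i).le h1c.le), fun i => ?_⟩
  have hsum : ∑ j, (Pa j - q j) * (ν j / (q j * (1 + c))) = c / (1 + c) := by
    rw [hc, Finset.sum_div]
    refine Finset.sum_congr rfl fun j _ => ?_
    field_simp
  rw [hsum]
  have hqi := (hqpos i).ne'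
  field_simp
end

section
/- Let q, P^a, ν ∈ ℝ^N with q_i > 0 and P^a_i ≥ q_i for all i, ν a probability vector. If y ∈ ℝ^N satisfies (diag q + ν·(P^a − q)ᵀ)ᵀ y ≥ 0 componentwise, then νᵀ y ≥ 0. -/
/-- Infeasibility of the Farkas alternative system: if
`q j * y j + (Pa j - q j) * (νᵀ y) ≥ 0` for all `j`, then `νᵀ y ≥ 0`. -/
theorem farkas_alternative_infeasible_star_market
    (N : ℕ) (q Pa ν y : Fin N → ℝ)
    (hqpos : ∀ i, 0 < q i) (hqPa : ∀ i, q i ≤ Pa i)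
    (hν : ∀ i, 0 ≤ ν i) (hνsum : ∑ i, ν i = 1)
    (hy : ∀ j, 0 ≤ q j * y j + (Pa j - q j) * ∑ i, ν i * y i) :
    0 ≤ ∑ i, ν i * y i := by
  by_contra h
  push_neg at h
  have hy' : ∀ j, 0 ≤ y j := by
    intro j
    have h1 := hy j
    have h2 : (Pa j - q j) * ∑ i, ν i * y i ≤ 0 :=
      mul_nonpos_of_nonneg_of_nonpos (by linarith [hqPa j]) h.le
    nlinarith [hqpos j]
  have : 0 ≤ ∑ i, ν i * y i :=
    Finset.sum_nonneg fun i _ => mul_nonneg (hν i) (hy' i)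
  linarith
end

section
/- Let X and Y be compact metric spaces, μ a Borel probability measure on X, ν a Borel probability measure on Y, c : X × Y → ℝ lower semicontinuous and bounded below, and m : X × Y → ℝ continuous, bounded, with inf m > 0. If the set Γ_m(μ,ν) of non-conservative transport plans is nonempty, then the infimum of ∫ c dπ over π ∈ Γ_m(μ,ν) is attained by some π* ∈ Γ_m(μ,ν). -/
open MeasureTheory

set_option linter.unusedSectionVars false

open MeasureTheory Filter TopologicalSpace Set
open scoped ENNReal NNReal

namespace NCK

variable {Z : Type*} [MetricSpace Z] [CompactSpace Z]

/-- admissible test functions for a set `U` -/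
def Adm (U : Set Z) (f : C(Z, ℝ)) : Prop :=
  (∀ x, 0 ≤ f x) ∧ (∀ x, f x ≤ 1) ∧ (∀ x, x ∉ U → f x = 0)

lemma adm_zero (U : Set Z) : Adm U (0 : C(Z, ℝ)) :=
  ⟨fun _ => le_rfl, fun _ => zero_le_one, fun _ _ => rfl⟩

lemma adm_mono {U V : Set Z} (h : U ⊆ V) {f : C(Z, ℝ)} (hf : Adm U f) : Adm V f :=
  ⟨hf.1, hf.2.1, fun x hx => hf.2.2 x fun hxU => hx (h hxU)⟩

instance admNonempty (U : Set Z) : Nonempty {f : C(Z, ℝ) // Adm U f} := ⟨⟨0, adm_zero U⟩⟩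

/-- a positive normalized linear functional -/
structure IsLF (L : C(Z, ℝ) → ℝ) : Prop where
  map_add : ∀ f g, L (f + g) = L f + L g
  map_smul : ∀ (r : ℝ) (f), L (r • f) = r * L f
  mono : ∀ {f g : C(Z, ℝ)}, f ≤ g → L f ≤ L g
  map_one : L 1 = 1

namespace IsLF

variable {L : C(Z, ℝ) → ℝ} (hL : IsLF L)
include hL

lemma map_zero : L 0 = 0 := by
  have := hL.map_smul 0 0
  simpa using this

lemma nonneg {f : C(Z, ℝ)} (hf : ∀ x, 0 ≤ f x) : 0 ≤ L f := by
  have h : (0 : C(Z, ℝ)) ≤ f := fun x => hf x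
  have := hL.mono h
  rwa [hL.map_zero] at this

lemma le_one {f : C(Z, ℝ)} (hf : ∀ x, f x ≤ 1) : L f ≤ 1 := by
  have h : f ≤ (1 : C(Z, ℝ)) := fun x => hf x
  have := hL.mono h
  rwa [hL.map_one] at this

lemma map_sum {ι : Type*} (s : Finset ι) (f : ι → C(Z, ℝ)) :
    L (∑ i ∈ s, f i) = ∑ i ∈ s, L (f i) := by
  classical
  induction s using Finset.induction_on with
  | empty => simpa using hL.map_zero
  | @insert a s h ih => rw [Finset.sum_insert h, hL.map_add, ih, Finset.sum_insert h]

end IsLF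

/-- inner content associated to `L` -/
noncomputable def lam (L : C(Z, ℝ) → ℝ) (U : Set Z) : ℝ≥0∞ :=
  ⨆ f : {f : C(Z, ℝ) // Adm U f}, ENNReal.ofReal (L f.1)

lemma le_lam {L : C(Z, ℝ) → ℝ} {U : Set Z} {f : C(Z, ℝ)} (hf : Adm U f) :
    ENNReal.ofReal (L f) ≤ lam L U :=
  le_iSup_of_le (⟨f, hf⟩ : {f : C(Z, ℝ) // Adm U f}) le_rfl

lemma lam_mono (L : C(Z, ℝ) → ℝ) {U V : Set Z} (h : U ⊆ V) : lam L U ≤ lam L V :=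
  iSup_le fun f => le_lam (adm_mono h f.2)

lemma lam_le_one {L : C(Z, ℝ) → ℝ} (hL : IsLF L) (U : Set Z) : lam L U ≤ 1 := by
  refine iSup_le fun f => ?_
  have := hL.le_one f.2.2.1
  calc ENNReal.ofReal (L f.1) ≤ ENNReal.ofReal 1 := ENNReal.ofReal_le_ofReal this
  _ = 1 := by simp

lemma lam_univ {L : C(Z, ℝ) → ℝ} (hL : IsLF L) : lam L (univ : Set Z) = 1 := by
  refine le_antisymm (lam_le_one hL _) ?_
  have h1 : Adm (univ : Set Z) (1 : C(Z, ℝ)) :=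
    ⟨fun _ => zero_le_one, fun _ => le_rfl, fun x hx => absurd (mem_univ x) hx⟩
  have := le_lam (L := L) h1
  rw [hL.map_one] at this
  simpa using this

lemma lam_empty {L : C(Z, ℝ) → ℝ} (hL : IsLF L) : lam L (∅ : Set Z) = 0 := by
  refine le_antisymm (iSup_le fun f => ?_) zero_le
  have hf0 : f.1 = 0 := ContinuousMap.ext fun x => f.2.2.2 x (notMem_empty x)
  simp [hf0, hL.map_zero]

/-- disjoint superadditivity -/
lemma lam_add_le {L : C(Z, ℝ) → ℝ} (hL : IsLF L) {U V W : Set Z} (hd : Disjoint U V)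
    (hUW : U ⊆ W) (hVW : V ⊆ W) : lam L U + lam L V ≤ lam L W := by
  simp only [lam, ENNReal.iSup_add, ENNReal.add_iSup]
  refine iSup_le fun f => iSup_le fun g => ?_
  -- here `f` is admissible for `V` and `g` for `U`
  have hadm : Adm W (g.1 + f.1) := by
    refine ⟨fun x => add_nonneg (g.2.1 x) (f.2.1 x), fun x => ?_, fun x hx => ?_⟩
    · by_cases hxU : x ∈ U
      · have hf : f.1 x = 0 := f.2.2.2 x (disjoint_left.mp hd hxU)
        simpa [hf] using g.2.2.1 x
      · have hg : g.1 x = 0 := g.2.2.2 x hxU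
        simpa [hg] using f.2.2.1 x
    · have h1 : f.1 x = 0 := f.2.2.2 x fun h => hx (hVW h)
      have h2 : g.1 x = 0 := g.2.2.2 x fun h => hx (hUW h)
      simp [h1, h2]
  have h := le_lam (L := L) hadm
  rw [hL.map_add] at h
  refine le_trans ?_ h
  rw [ENNReal.ofReal_add (hL.nonneg g.2.1) (hL.nonneg f.2.1), add_comm]

/-- countable subadditivity on open sets, via partitions of unity -/
lemma lam_iUnion_le {L : C(Z, ℝ) → ℝ} (hL : IsLF L) {U : ℕ → Set Z} (hU : ∀ i, IsOpen (U i)) :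
    lam L (⋃ i, U i) ≤ ∑' i, lam L (U i) := by
  refine iSup_le fun f => ?_
  refine ENNReal.le_of_forall_pos_le_add fun ε hε _ => ?_
  classical
  set K : Set Z := {x | (ε : ℝ) ≤ f.1 x} with hK
  have hKc : IsClosed K := isClosed_le continuous_const f.1.continuous
  have hKcp : IsCompact K := hKc.isCompact
  have hKsub : K ⊆ ⋃ i, U i := by
    intro x hx
    by_contra hxU
    have h0 : f.1 x = 0 := f.2.2.2 x hxU
    have : (ε : ℝ) ≤ 0 := by rw [← h0]; exact hx
    exact absurd (lt_of_lt_of_le (by exact_mod_cast hε) this) (lt_irrefl 0)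
  obtain ⟨t, ht⟩ := hKcp.elim_finite_subcover U hU hKsub
  have hcov : K ⊆ ⋃ i : {i // i ∈ t}, U i := by
    intro x hx
    rcases Set.mem_iUnion₂.mp (ht hx) with ⟨i, hi, hxi⟩
    exact Set.mem_iUnion.mpr ⟨⟨i, hi⟩, hxi⟩
  obtain ⟨ρ, hρsub, -⟩ := PartitionOfUnity.exists_isSubordinate_of_locallyFinite_t2space
    hKcp (fun i : {i // i ∈ t} => U i) (fun i => hU i) (locallyFinite_of_finite _) hcov
  set g : {i // i ∈ t} → C(Z, ℝ) := fun i => f.1 * ρ i with hg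
  have hρ_le_one : ∀ (i : {i // i ∈ t}) (x : Z), ρ i x ≤ 1 := fun i x => ρ.le_one i x
  have hadm : ∀ i : {i // i ∈ t}, Adm (U i) (g i) := by
    intro i
    refine ⟨fun x => mul_nonneg (f.2.1 x) (ρ.nonneg i x), fun x => ?_, fun x hx => ?_⟩
    · exact mul_le_one₀ (f.2.2.1 x) (ρ.nonneg i x) (hρ_le_one i x)
    · have : ρ i x = 0 := by
        have hns : x ∉ tsupport (ρ i) := fun hmem => hx (hρsub i hmem)
        exact image_eq_zero_of_notMem_tsupport hns
      simp [hg, this]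
  have hkey : ∀ x, f.1 x ≤ (∑ i : {i // i ∈ t}, g i x) + (ε : ℝ) := by
    intro x
    by_cases hx : x ∈ K
    · have h1 : ∑ᶠ i, ρ i x = 1 := ρ.sum_eq_one' x hx
      rw [finsum_eq_sum_of_fintype] at h1
      have : ∑ i : {i // i ∈ t}, g i x = f.1 x := by
        simp only [hg, ContinuousMap.mul_apply]
        rw [← Finset.mul_sum, h1, mul_one]
      rw [this]
      exact le_add_of_nonneg_right (by positivity)
    · have h2 : f.1 x ≤ (ε : ℝ) := le_of_lt (by simpa [hK] using hx)
      have h3 : (0 : ℝ) ≤ ∑ i : {i // i ∈ t}, g i x :=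
        Finset.sum_nonneg fun i _ => mul_nonneg (f.2.1 x) (ρ.nonneg i x)
      linarith
  have hle : f.1 ≤ (∑ i : {i // i ∈ t}, g i) + (ε : ℝ) • (1 : C(Z, ℝ)) := by
    intro x
    simpa [ContinuousMap.sum_apply] using hkey x
  have hLle : L f.1 ≤ (∑ i : {i // i ∈ t}, L (g i)) + (ε : ℝ) := by
    have := hL.mono hle
    rwa [hL.map_add, hL.map_sum, hL.map_smul, hL.map_one, mul_one] at this
  have step1 : ENNReal.ofReal (L f.1) ≤
      (∑ i : {i // i ∈ t}, ENNReal.ofReal (L (g i))) + (ε : ℝ≥0∞) := by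
    calc ENNReal.ofReal (L f.1)
        ≤ ENNReal.ofReal ((∑ i : {i // i ∈ t}, L (g i)) + (ε : ℝ)) :=
          ENNReal.ofReal_le_ofReal hLle
      _ ≤ ENNReal.ofReal (∑ i : {i // i ∈ t}, L (g i)) + ENNReal.ofReal (ε : ℝ) :=
          ENNReal.ofReal_add_le
      _ = (∑ i : {i // i ∈ t}, ENNReal.ofReal (L (g i))) + (ε : ℝ≥0∞) := by
          rw [ENNReal.ofReal_sum_of_nonneg fun i _ => hL.nonneg (hadm i).1,
            ENNReal.ofReal_coe_nnreal]
  refine step1.trans (add_le_add_left ?_ _)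
  calc ∑ i : {i // i ∈ t}, ENNReal.ofReal (L (g i))
      ≤ ∑ i : {i // i ∈ t}, lam L (U i) := Finset.sum_le_sum fun i _ => le_lam (hadm i)
    _ = ∑ i ∈ t, lam L (U i) := Finset.sum_coe_sort t fun i => lam L (U i)
    _ ≤ ∑' i, lam L (U i) := ENNReal.sum_le_tsum t

/-- outer regularization -/
noncomputable def mout (L : C(Z, ℝ) → ℝ) (A : Set Z) : ℝ≥0∞ :=
  ⨅ (U : Set Z) (_ : IsOpen U) (_ : A ⊆ U), lam L U

lemma mout_le_lam (L : C(Z, ℝ) → ℝ) {A U : Set Z} (hU : IsOpen U) (hAU : A ⊆ U) :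
    mout L A ≤ lam L U := by
  refine iInf_le_of_le U ?_
  exact le_trans (iInf_le_of_le hU (iInf_le_of_le hAU le_rfl)) le_rfl

lemma mout_open (L : C(Z, ℝ) → ℝ) {U : Set Z} (hU : IsOpen U) : mout L U = lam L U := by
  refine le_antisymm (mout_le_lam L hU subset_rfl) ?_
  exact le_iInf fun V => le_iInf fun _ => le_iInf fun hUV => lam_mono L hUV

lemma mout_mono (L : C(Z, ℝ) → ℝ) {A B : Set Z} (h : A ⊆ B) : mout L A ≤ mout L B :=
  le_iInf fun U => le_iInf fun hU => le_iInf fun hBU => mout_le_lam L hU (h.trans hBU)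

lemma mout_le_one {L : C(Z, ℝ) → ℝ} (hL : IsLF L) (A : Set Z) : mout L A ≤ 1 := by
  refine le_trans (mout_le_lam L isOpen_univ (subset_univ A)) ?_
  rw [lam_univ hL]

lemma mout_empty {L : C(Z, ℝ) → ℝ} (hL : IsLF L) : mout L (∅ : Set Z) = 0 := by
  refine le_antisymm ?_ zero_le
  refine le_trans (mout_le_lam L isOpen_empty subset_rfl) ?_
  rw [lam_empty hL]

lemma tsum_half_pow : (∑' i : ℕ, (2⁻¹ : ℝ≥0∞) ^ (i + 1)) = 1 := by
  have h : ∀ i : ℕ, (2⁻¹ : ℝ≥0∞) ^ (i + 1) = 2⁻¹ * 2⁻¹ ^ i := fun i => by ring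
  simp only [h]
  rw [ENNReal.tsum_mul_left, ENNReal.tsum_geometric]
  rw [ENNReal.one_sub_inv_two]
  rw [inv_inv, ENNReal.inv_mul_cancel (by norm_num) (by norm_num)]

lemma mout_iUnion_le {L : C(Z, ℝ) → ℝ} (hL : IsLF L) (A : ℕ → Set Z) :
    mout L (⋃ i, A i) ≤ ∑' i, mout L (A i) := by
  refine ENNReal.le_of_forall_pos_le_add fun ε hε _ => ?_
  have hchoice : ∀ i : ℕ, ∃ U : Set Z, IsOpen U ∧ A i ⊆ U ∧
      lam L U ≤ mout L (A i) + (ε : ℝ≥0∞) * 2⁻¹ ^ (i + 1) := by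
    intro i
    have hlt : mout L (A i) < mout L (A i) + (ε : ℝ≥0∞) * 2⁻¹ ^ (i + 1) := by
      refine ENNReal.lt_add_right (ne_top_of_le_ne_top ENNReal.one_ne_top (mout_le_one hL _))
        (mul_ne_zero (by exact_mod_cast hε.ne') (pow_ne_zero _ (by norm_num)))
    rw [mout] at hlt
    rw [iInf_lt_iff] at hlt
    obtain ⟨U, hU⟩ := hlt
    rw [iInf_lt_iff] at hU
    obtain ⟨hU1, hU2⟩ := hU
    rw [iInf_lt_iff] at hU2
    obtain ⟨hU2, hU3⟩ := hU2
    exact ⟨U, hU1, hU2, le_of_lt hU3⟩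
  choose U hUopen hUsub hUle using hchoice
  calc mout L (⋃ i, A i) ≤ lam L (⋃ i, U i) :=
        mout_le_lam L (isOpen_iUnion hUopen) (Set.iUnion_mono hUsub)
    _ ≤ ∑' i, lam L (U i) := lam_iUnion_le hL hUopen
    _ ≤ ∑' i, (mout L (A i) + (ε : ℝ≥0∞) * 2⁻¹ ^ (i + 1)) := ENNReal.tsum_le_tsum hUle
    _ = (∑' i, mout L (A i)) + (ε : ℝ≥0∞) * ∑' i, (2⁻¹ : ℝ≥0∞) ^ (i + 1) := by
        rw [ENNReal.tsum_add, ENNReal.tsum_mul_left]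
    _ = (∑' i, mout L (A i)) + ε := by rw [tsum_half_pow, mul_one]

/-- the outer measure induced by `L` -/
noncomputable def outerOf {L : C(Z, ℝ) → ℝ} (hL : IsLF L) : OuterMeasure Z where
  measureOf := mout L
  empty := mout_empty hL
  mono := fun h => mout_mono L h
  iUnion_nat := fun s _ => mout_iUnion_le hL s

lemma outerOf_apply {L : C(Z, ℝ) → ℝ} (hL : IsLF L) (A : Set Z) : outerOf hL A = mout L A := rfl

lemma outerOf_isMetric {L : C(Z, ℝ) → ℝ} (hL : IsLF L) :
    (outerOf hL).IsMetric := by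
  intro s t hst
  refine le_antisymm (measure_union_le s t) ?_
  obtain ⟨r, hr0, hsep⟩ := hst
  show mout L s + mout L t ≤ mout L (s ∪ t)
  refine le_iInf fun W => le_iInf fun hW => le_iInf fun hsub => ?_
  set Ts : Set Z := {x | EMetric.infEdist x s < r / 2} with hTs
  set Tt : Set Z := {x | EMetric.infEdist x t < r / 2} with hTt
  have hTs_open : IsOpen Ts := isOpen_lt EMetric.continuous_infEdist continuous_const
  have hTt_open : IsOpen Tt := isOpen_lt EMetric.continuous_infEdist continuous_const
  have hsTs : s ⊆ Ts := fun x hx => by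
    simp only [hTs, mem_setOf_eq, EMetric.infEdist_zero_of_mem hx]
    exact lt_of_le_of_lt (le_of_eq (EMetric.infEdist_zero_of_mem hx)) (ENNReal.half_pos hr0)
  have htTt : t ⊆ Tt := fun x hx => by
    simp only [hTt, mem_setOf_eq, EMetric.infEdist_zero_of_mem hx]
    exact lt_of_le_of_lt (le_of_eq (EMetric.infEdist_zero_of_mem hx)) (ENNReal.half_pos hr0)
  have hdis : Disjoint (W ∩ Ts) (W ∩ Tt) := by
    rw [Set.disjoint_left]
    rintro x ⟨-, hx1⟩ ⟨-, hx2⟩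
    obtain ⟨a, ha, hxa⟩ := EMetric.infEdist_lt_iff.mp hx1
    obtain ⟨b, hb, hxb⟩ := EMetric.infEdist_lt_iff.mp hx2
    have h1 : r ≤ edist a b := hsep a ha b hb
    have h2 : edist a b < r := by
      calc edist a b ≤ edist a x + edist x b := edist_triangle a x b
        _ = edist x a + edist x b := by rw [edist_comm]
        _ < r / 2 + r / 2 := ENNReal.add_lt_add hxa hxb
        _ = r := ENNReal.add_halves r
    exact absurd h1 (not_le.mpr h2)
  calc mout L s + mout L t
      ≤ lam L (W ∩ Ts) + lam L (W ∩ Tt) := by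
        refine add_le_add ?_ ?_
        · exact mout_le_lam L (hW.inter hTs_open)
            (subset_inter ((subset_union_left).trans hsub) hsTs)
        · exact mout_le_lam L (hW.inter hTt_open)
            (subset_inter ((subset_union_right).trans hsub) htTt)
    _ ≤ lam L W := lam_add_le hL hdis inter_subset_left inter_subset_left

variable [MeasurableSpace Z] [BorelSpace Z]

/-- the Borel measure induced by `L` -/
noncomputable def rieszM {L : C(Z, ℝ) → ℝ} (hL : IsLF L) : Measure Z :=
  (outerOf hL).toMeasure (by
    rw [BorelSpace.measurable_eq (α := Z)]
    exact (outerOf_isMetric hL).borel_le_caratheodory)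

lemma rieszM_apply {L : C(Z, ℝ) → ℝ} (hL : IsLF L) {s : Set Z} (hs : MeasurableSet s) :
    rieszM hL s = mout L s :=
  MeasureTheory.toMeasure_apply _ _ hs

lemma rieszM_open {L : C(Z, ℝ) → ℝ} (hL : IsLF L) {U : Set Z} (hU : IsOpen U) :
    rieszM hL U = lam L U := by
  rw [rieszM_apply hL hU.measurableSet, mout_open L hU]

lemma rieszM_prob {L : C(Z, ℝ) → ℝ} (hL : IsLF L) : IsProbabilityMeasure (rieszM hL) :=
  ⟨by rw [rieszM_open hL isOpen_univ, lam_univ hL]⟩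

section Repr

variable {L : C(Z, ℝ) → ℝ}

lemma sum_min_pieces (f : C(Z, ℝ)) {δ : ℝ} (hδ : 0 < δ) (hf : ∀ x, 0 ≤ f x) (x : Z) (K : ℕ) :
    ∑ i ∈ Finset.range K, min δ (max (f x - i * δ) 0) = min (f x) (K * δ) := by
  induction K with
  | zero => simp [min_eq_right (hf x)]
  | succ K ih =>
    rw [Finset.sum_range_succ, ih]
    push_cast
    rcases le_total (f x) (K * δ) with h | h
    · have h1 : max (f x - K * δ) 0 = 0 := max_eq_right (by linarith)
      rw [h1, min_eq_right hδ.le, min_eq_left h, min_eq_left (by nlinarith), add_zero]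
    · rw [min_eq_right h]
      rcases le_total (f x) ((K + 1) * δ) with h2 | h2
      · have h3 : max (f x - K * δ) 0 = f x - K * δ := max_eq_left (by linarith)
        rw [h3, min_eq_right (by nlinarith), min_eq_left h2]
        ring
      · have h3 : max (f x - K * δ) 0 = f x - K * δ := max_eq_left (by linarith)
        rw [h3, min_eq_left (by nlinarith), min_eq_right h2]
        ring

/-- The key representation theorem: the integral of a nonnegative continuous function
against the Riesz measure equals the value of the functional. -/
theorem lintegral_rieszM (hL : IsLF L) (f : C(Z, ℝ)) (hf : ∀ x, 0 ≤ f x) :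
    ∫⁻ z, ENNReal.ofReal (f z) ∂(rieszM hL) = ENNReal.ofReal (L f) := by
  set κ := rieszM hL with hκ
  haveI : IsProbabilityMeasure κ := rieszM_prob hL
  set A := ∫⁻ z, ENNReal.ofReal (f z) ∂κ with hA
  set B := ENNReal.ofReal (L f) with hB
  have key : ∀ δ : ℝ, 0 < δ → A ≤ B + ENNReal.ofReal δ ∧ B ≤ A + ENNReal.ofReal δ := by
    intro δ hδ
    set k' : ℕ := ⌈‖f‖ / δ⌉₊ with hk'
    set k : ℕ := k' + 1 with hk
    set g : ℕ → C(Z, ℝ) := fun i =>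
      ⟨fun x => min δ (max (f x - i * δ) 0), by
        exact (continuous_const.min ((f.continuous.sub continuous_const).max
          continuous_const))⟩ with hg
    set U : ℕ → Set Z := fun i => {x | (i : ℝ) * δ < f x} with hU
    have hUopen : ∀ i, IsOpen (U i) := fun i =>
      isOpen_lt continuous_const f.continuous
    have p1 : ∀ i x, 0 ≤ g i x := fun i x => le_min hδ.le (le_max_right _ _)
    have p2 : ∀ i x, g i x ≤ δ := fun i x => min_le_left _ _
    have p3 : ∀ i x, x ∈ U (i + 1) → g i x = δ := by
      intro i x hx
      have hx' : ((i : ℝ) + 1) * δ < f x := by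
        have := hx
        simp only [hU, mem_setOf_eq] at this
        push_cast at this
        exact this
      have : δ ≤ max (f x - i * δ) 0 := le_max_of_le_left (by nlinarith)
      exact min_eq_left this
    have p4 : ∀ i x, x ∉ U i → g i x = 0 := by
      intro i x hx
      simp only [hU, mem_setOf_eq, not_lt] at hx
      have : max (f x - i * δ) 0 = 0 := max_eq_right (by linarith)
      simp [hg, this, min_eq_right hδ.le]
    have hsum : ∀ x, ∑ i ∈ Finset.range k, g i x = f x := by
      intro x
      have := sum_min_pieces f hδ hf x k
      simp only [hg, ContinuousMap.coe_mk] at this ⊢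
      rw [this]
      refine min_eq_left ?_
      have h1 : f x ≤ ‖f‖ := le_trans (le_abs_self _) (f.norm_coe_le_norm x)
      have h2 : ‖f‖ / δ ≤ (k' : ℝ) := Nat.le_ceil _
      have h3 : ‖f‖ ≤ (k' : ℝ) * δ := by
        rw [div_le_iff₀ hδ] at h2
        linarith
      push_cast
      nlinarith [show (k : ℝ) = k' + 1 by rw [hk]; push_cast; ring]
    have hfsum : f = ∑ i ∈ Finset.range k, g i := by
      ext x
      rw [ContinuousMap.sum_apply]
      exact (hsum x).symm
    set a : ℕ → ℝ≥0∞ := fun i => ENNReal.ofReal δ * κ (U i) with ha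
    -- A-side estimates
    have hAsum : A = ∑ i ∈ Finset.range k, ∫⁻ z, ENNReal.ofReal (g i z) ∂κ := by
      rw [hA]
      have : ∀ z, ENNReal.ofReal (f z) = ∑ i ∈ Finset.range k, ENNReal.ofReal (g i z) := by
        intro z
        rw [← ENNReal.ofReal_sum_of_nonneg fun i _ => p1 i z, hsum z]
      simp_rw [this]
      exact lintegral_finset_sum _ fun i _ => ((g i).continuous.measurable).ennreal_ofReal
    have hAlow : ∀ i, a (i + 1) ≤ ∫⁻ z, ENNReal.ofReal (g i z) ∂κ := by
      intro i
      have hpt : ∀ z, (U (i + 1)).indicator (fun _ => ENNReal.ofReal δ) z ≤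
          ENNReal.ofReal (g i z) := by
        intro z
        by_cases hz : z ∈ U (i + 1)
        · rw [Set.indicator_of_mem hz, p3 i z hz]
        · rw [Set.indicator_of_notMem hz]
          exact zero_le
      calc a (i + 1) = ∫⁻ z, (U (i + 1)).indicator (fun _ => ENNReal.ofReal δ) z ∂κ := by
            rw [lintegral_indicator_const (hUopen (i + 1)).measurableSet]
        _ ≤ _ := lintegral_mono hpt
    have hAhigh : ∀ i, (∫⁻ z, ENNReal.ofReal (g i z) ∂κ) ≤ a i := by
      intro i
      have hpt : ∀ z, ENNReal.ofReal (g i z) ≤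
          (U i).indicator (fun _ => ENNReal.ofReal δ) z := by
        intro z
        by_cases hz : z ∈ U i
        · rw [Set.indicator_of_mem hz]
          exact ENNReal.ofReal_le_ofReal (p2 i z)
        · rw [Set.indicator_of_notMem hz, p4 i z hz]
          simp
      calc (∫⁻ z, ENNReal.ofReal (g i z) ∂κ)
          ≤ ∫⁻ z, (U i).indicator (fun _ => ENNReal.ofReal δ) z ∂κ := lintegral_mono hpt
        _ = a i := lintegral_indicator_const (hUopen i).measurableSet _
    -- B-side estimates
    have hBsum : B = ∑ i ∈ Finset.range k, ENNReal.ofReal (L (g i)) := by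
      rw [hB, hfsum, hL.map_sum]
      exact ENNReal.ofReal_sum_of_nonneg fun i _ => hL.nonneg (p1 i)
    have hBlow : ∀ i, a (i + 1) ≤ ENNReal.ofReal (L (g i)) := by
      intro i
      have hκU : κ (U (i + 1)) = lam L (U (i + 1)) := rieszM_open hL (hUopen (i + 1))
      rw [ha]
      simp only
      rw [hκU, lam, ENNReal.mul_iSup]
      refine iSup_le fun p => ?_
      have hle : (δ • p.1 : C(Z, ℝ)) ≤ g i := by
        intro z
        show δ * p.1 z ≤ g i z
        by_cases hz : z ∈ U (i + 1)
        · rw [p3 i z hz]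
          calc δ * p.1 z ≤ δ * 1 := by
                have := p.2.2.1 z
                nlinarith [p.2.1 z]
            _ = δ := mul_one δ
        · rw [p.2.2.2 z hz, mul_zero]
          exact p1 i z
      calc ENNReal.ofReal δ * ENNReal.ofReal (L p.1)
          = ENNReal.ofReal (δ * L p.1) := (ENNReal.ofReal_mul hδ.le).symm
        _ = ENNReal.ofReal (L (δ • p.1)) := by rw [hL.map_smul]
        _ ≤ ENNReal.ofReal (L (g i)) := ENNReal.ofReal_le_ofReal (hL.mono hle)
    have hBhigh : ∀ i, ENNReal.ofReal (L (g i)) ≤ a i := by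
      intro i
      have hκU : κ (U i) = lam L (U i) := rieszM_open hL (hUopen i)
      have hadm : Adm (U i) (δ⁻¹ • g i) := by
        refine ⟨fun x => ?_, fun x => ?_, fun x hx => ?_⟩
        · show 0 ≤ δ⁻¹ * g i x
          have := p1 i x
          positivity
        · show δ⁻¹ * g i x ≤ 1
          rw [← inv_mul_cancel₀ hδ.ne']
          exact mul_le_mul_of_nonneg_left (p2 i x) (by positivity)
        · show δ⁻¹ * g i x = 0
          rw [p4 i x hx, mul_zero]
      have hgi : L (g i) = δ * L (δ⁻¹ • g i) := by
        rw [hL.map_smul, ← mul_assoc, mul_inv_cancel₀ hδ.ne', one_mul]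
      rw [hgi, ENNReal.ofReal_mul hδ.le, ha]
      simp only
      rw [hκU]
      exact mul_le_mul_right (le_lam hadm) _
    -- shift estimate
    have hshift : ∑ i ∈ Finset.range k, a i ≤
        (∑ i ∈ Finset.range k, a (i + 1)) + ENNReal.ofReal δ := by
      rw [hk, Finset.sum_range_succ']
      refine add_le_add ?_ ?_
      · exact Finset.sum_le_sum_of_subset (Finset.range_subset_range.mpr (Nat.le_succ k'))
      · rw [ha]
        simp only
        calc ENNReal.ofReal δ * κ (U 0) ≤ ENNReal.ofReal δ * 1 := by
              exact mul_le_mul_right prob_le_one _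
          _ = ENNReal.ofReal δ := mul_one _
    have hAup : A ≤ ∑ i ∈ Finset.range k, a i := by
      rw [hAsum]; exact Finset.sum_le_sum fun i _ => hAhigh i
    have hAdown : ∑ i ∈ Finset.range k, a (i + 1) ≤ A := by
      rw [hAsum]; exact Finset.sum_le_sum fun i _ => hAlow i
    have hBup : B ≤ ∑ i ∈ Finset.range k, a i := by
      rw [hBsum]; exact Finset.sum_le_sum fun i _ => hBhigh i
    have hBdown : ∑ i ∈ Finset.range k, a (i + 1) ≤ B := by
      rw [hBsum]; exact Finset.sum_le_sum fun i _ => hBlow i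
    constructor
    · calc A ≤ ∑ i ∈ Finset.range k, a i := hAup
        _ ≤ (∑ i ∈ Finset.range k, a (i + 1)) + ENNReal.ofReal δ := hshift
        _ ≤ B + ENNReal.ofReal δ := add_le_add_left hBdown _
    · calc B ≤ ∑ i ∈ Finset.range k, a i := hBup
        _ ≤ (∑ i ∈ Finset.range k, a (i + 1)) + ENNReal.ofReal δ := hshift
        _ ≤ A + ENNReal.ofReal δ := add_le_add_left hAdown _
  refine le_antisymm ?_ ?_
  · refine ENNReal.le_of_forall_pos_le_add fun ε hε _ => ?_
    have := (key ε (by exact_mod_cast hε)).1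
    rwa [ENNReal.ofReal_coe_nnreal] at this
  · refine ENNReal.le_of_forall_pos_le_add fun ε hε _ => ?_
    have := (key ε (by exact_mod_cast hε)).2
    rwa [ENNReal.ofReal_coe_nnreal] at this

end Repr

section Seq

lemma integrable_cm (f : C(Z, ℝ)) (π : Measure Z) [IsFiniteMeasure π] : Integrable f π :=
  f.continuous.integrable_of_hasCompactSupport (HasCompactSupport.of_compactSpace f)

lemma abs_integral_le (f : C(Z, ℝ)) (π : Measure Z) [IsProbabilityMeasure π] :
    |∫ z, f z ∂π| ≤ ‖f‖ := by
  have h := norm_integral_le_of_norm_le_const (μ := π) (C := ‖f‖)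
    (Filter.Eventually.of_forall fun z => f.norm_coe_le_norm z)
  simpa using h

/-- Main construction: from any sequence of probability measures on a compact metric
space, extract a subsequence with a weak limit measure. -/
theorem exists_subseq_rieszM (P : ℕ → Measure Z) (hP : ∀ n, IsProbabilityMeasure (P n)) :
    ∃ (κ : Measure Z) (φ : ℕ → ℕ), StrictMono φ ∧ IsProbabilityMeasure κ ∧
      (∀ f : C(Z, ℝ), (∀ x, 0 ≤ f x) →
        Filter.Tendsto (fun j => ∫ z, f z ∂P (φ j)) atTop
          (nhds ((∫⁻ z, ENNReal.ofReal (f z) ∂κ).toReal))) ∧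
      (∀ U : Set Z, IsOpen U → κ U ≤ liminf (fun j => P (φ j) U) atTop) := by
  haveI : ∀ n, IsProbabilityMeasure (P n) := hP
  obtain ⟨D, hD⟩ := TopologicalSpace.exists_dense_seq C(Z, ℝ)
  set S : Set (ℕ → ℝ) := Set.univ.pi fun k => Icc (-‖D k‖) ‖D k‖ with hS
  have hScomp : IsCompact S := isCompact_univ_pi fun k => isCompact_Icc
  set u : ℕ → ℕ → ℝ := fun n k => ∫ z, D k z ∂P n with hu
  have huS : ∀ n, u n ∈ S := by
    intro n
    rw [Set.mem_univ_pi]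
    intro k
    exact abs_le.mp (abs_integral_le (D k) (P n))
  obtain ⟨b, -, φ, hφ, hconv⟩ := hScomp.tendsto_subseq huS
  have hptconv : ∀ k, Filter.Tendsto (fun j => ∫ z, D k z ∂P (φ j)) atTop (nhds (b k)) := by
    intro k
    have := tendsto_pi_nhds.mp hconv k
    exact this
  have hdistle : ∀ (f g : C(Z, ℝ)) (n : ℕ),
      dist (∫ z, f z ∂P n) (∫ z, g z ∂P n) ≤ dist f g := by
    intro f g n
    rw [Real.dist_eq, ← integral_sub (integrable_cm f _) (integrable_cm g _)]
    have h := abs_integral_le (f - g) (P n)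
    simp only [ContinuousMap.sub_apply] at h
    rw [dist_eq_norm]
    exact h
  have hcau : ∀ f : C(Z, ℝ), ∃ r : ℝ,
      Filter.Tendsto (fun j => ∫ z, f z ∂P (φ j)) atTop (nhds r) := by
    intro f
    apply cauchySeq_tendsto_of_complete
    rw [Metric.cauchySeq_iff]
    intro ε hε
    obtain ⟨k, hk⟩ : ∃ k, dist f (D k) < ε / 3 := hD.exists_dist_lt f (by linarith)
    have hck : CauchySeq (fun j => ∫ z, D k z ∂P (φ j)) := (hptconv k).cauchySeq
    rw [Metric.cauchySeq_iff] at hck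
    obtain ⟨N, hN⟩ := hck (ε / 3) (by linarith)
    refine ⟨N, fun m hm n hn => ?_⟩
    calc dist (∫ z, f z ∂P (φ m)) (∫ z, f z ∂P (φ n))
        ≤ dist (∫ z, f z ∂P (φ m)) (∫ z, D k z ∂P (φ m)) +
            dist (∫ z, D k z ∂P (φ m)) (∫ z, D k z ∂P (φ n)) +
            dist (∫ z, D k z ∂P (φ n)) (∫ z, f z ∂P (φ n)) := dist_triangle4 _ _ _ _
      _ < ε / 3 + ε / 3 + ε / 3 := by
          refine add_lt_add (add_lt_add ?_ (hN m hm n hn)) ?_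
          · exact lt_of_le_of_lt (hdistle f (D k) (φ m)) hk
          · rw [dist_comm]
            exact lt_of_le_of_lt (hdistle f (D k) (φ n)) hk
      _ = ε := by ring
  choose Lfun hLfun using hcau
  have hLF : IsLF Lfun := by
    constructor
    · intro f g
      refine tendsto_nhds_unique (hLfun (f + g)) ?_
      have heq : (fun j => ∫ z, (f + g) z ∂P (φ j)) =
          fun j => (∫ z, f z ∂P (φ j)) + ∫ z, g z ∂P (φ j) := by
        funext j
        rw [← integral_add (integrable_cm f _) (integrable_cm g _)]
        apply integral_congr_ae
        filter_upwards with z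
        simp [ContinuousMap.add_apply]
      rw [heq]
      exact (hLfun f).add (hLfun g)
    · intro r f
      refine tendsto_nhds_unique (hLfun (r • f)) ?_
      have heq : (fun j => ∫ z, (r • f) z ∂P (φ j)) =
          fun j => r * ∫ z, f z ∂P (φ j) := by
        funext j
        simp only [ContinuousMap.smul_apply, smul_eq_mul]
        exact integral_const_mul r _
      rw [heq]
      exact (hLfun f).const_mul r
    · intro f g hfg
      refine le_of_tendsto_of_tendsto' (hLfun f) (hLfun g) fun j => ?_
      exact integral_mono (integrable_cm f _) (integrable_cm g _) hfg
    · refine tendsto_nhds_unique (hLfun 1) ?_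
      have heq : (fun j => ∫ z, (1 : C(Z, ℝ)) z ∂P (φ j)) = fun _ => (1 : ℝ) := by
        funext j
        simp [ContinuousMap.one_apply]
      rw [heq]
      exact tendsto_const_nhds
  refine ⟨rieszM hLF, φ, hφ, rieszM_prob hLF, ?_, ?_⟩
  · intro f hf
    rw [lintegral_rieszM hLF f hf, ENNReal.toReal_ofReal (hLF.nonneg hf)]
    exact hLfun f
  · intro U hU
    rw [rieszM_open hLF hU]
    refine iSup_le fun p => ?_
    have h1 : ∀ j, ENNReal.ofReal (∫ z, p.1 z ∂P (φ j)) ≤ P (φ j) U := by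
      intro j
      have hle : ∫ z, p.1 z ∂P (φ j) ≤ (P (φ j) U).toReal := by
        have hmono : ∫ z, p.1 z ∂P (φ j) ≤
            ∫ z, U.indicator (fun _ => (1 : ℝ)) z ∂P (φ j) := by
          refine integral_mono (integrable_cm p.1 _)
            ((integrable_const (1 : ℝ)).indicator hU.measurableSet) fun z => ?_
          by_cases hz : z ∈ U
          · rw [Set.indicator_of_mem hz]
            exact p.2.2.1 z
          · rw [Set.indicator_of_notMem hz, p.2.2.2 z hz]
        rwa [integral_indicator_const (1 : ℝ) hU.measurableSet, smul_eq_mul, mul_one]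
          at hmono
      calc ENNReal.ofReal (∫ z, p.1 z ∂P (φ j))
          ≤ ENNReal.ofReal ((P (φ j) U).toReal) := ENNReal.ofReal_le_ofReal hle
        _ = P (φ j) U := ENNReal.ofReal_toReal (measure_ne_top _ _)
    have h2 : Filter.Tendsto (fun j => ENNReal.ofReal (∫ z, p.1 z ∂P (φ j))) atTop
        (nhds (ENNReal.ofReal (Lfun p.1))) :=
      (ENNReal.continuous_ofReal.tendsto _).comp (hLfun p.1)
    calc ENNReal.ofReal (Lfun p.1)
        = liminf (fun j => ENNReal.ofReal (∫ z, p.1 z ∂P (φ j))) atTop := h2.liminf_eq.symm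
      _ ≤ liminf (fun j => P (φ j) U) atTop :=
          liminf_le_liminf (Filter.Eventually.of_forall h1)

end Seq

lemma lintegral_ofReal_cm_ne_top {W : Type*} [MetricSpace W] [CompactSpace W]
    [MeasurableSpace W] [BorelSpace W] (G : C(W, ℝ)) (ξ : Measure W) [IsFiniteMeasure ξ] :
    ∫⁻ p, ENNReal.ofReal (G p) ∂ξ ≠ ⊤ := by
  have hb : ∀ p, ENNReal.ofReal (G p) ≤ ENNReal.ofReal ‖G‖ := fun p =>
    ENNReal.ofReal_le_ofReal (le_trans (le_abs_self _) (G.norm_coe_le_norm p))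
  refine ne_top_of_le_ne_top ?_ (lintegral_mono hb)
  rw [lintegral_const]
  exact ENNReal.mul_ne_top ENNReal.ofReal_ne_top (measure_ne_top _ _)

end NCK

open NCK


/-- Existence of an optimal plan for the non-conservative Kantorovich
problem: with `X, Y` compact metric, `c` lower semicontinuous and bounded below
(by `Cl`), `m` continuous bounded with `inf m > 0`, and `Γ_m(μ,ν)` nonempty,
the infimum of the total cost over `Γ_m(μ,ν)` is attained. (The cost is
expressed via the lower integral of `c - Cl`, which orders plans exactly as
`∫ c dπ` does since all plans are probability measures.) -/
theorem nonconservative_kantorovich_exists_minimizer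
    {X Y : Type*} [MetricSpace X] [CompactSpace X]
    [MeasurableSpace X] [BorelSpace X]
    [MetricSpace Y] [CompactSpace Y] [MeasurableSpace Y] [BorelSpace Y]
    (μ : Measure X) (ν : Measure Y)
    [IsProbabilityMeasure μ] [IsProbabilityMeasure ν]
    (c : X × Y → ℝ) (hc : LowerSemicontinuous c)
    (Cl : ℝ) (hCl : ∀ p, Cl ≤ c p)
    (m : X × Y → ℝ) (hm : Continuous m)
    (ε : ℝ) (hε : 0 < ε) (hmlb : ∀ p, ε ≤ m p)
    (Cm : ℝ) (hmub : ∀ p, m p ≤ Cm)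
    (Γ : Set (Measure (X × Y)))
    (hΓ : Γ = {π : Measure (X × Y) | IsProbabilityMeasure π ∧
        π.map Prod.fst = μ ∧
        ∀ B : Set Y, MeasurableSet B →
          ∫ p in Set.univ ×ˢ B, m p ∂π = (∫ p, m p ∂π) * (ν B).toReal})
    (hne : Γ.Nonempty) :
    ∃ πs ∈ Γ, ∀ π ∈ Γ,
      ∫⁻ p, ENNReal.ofReal (c p - Cl) ∂πs ≤ ∫⁻ p, ENNReal.ofReal (c p - Cl) ∂π := by
  classical
  have hm0 : ∀ p, 0 ≤ m p := fun p => le_trans hε.le (hmlb p)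
  set M : C(X × Y, ℝ) := ⟨m, hm⟩ with hM
  set F : Measure (X × Y) → ℝ≥0∞ := fun π => ∫⁻ p, ENNReal.ofReal (c p - Cl) ∂π with hF
  set s : Set ℝ≥0∞ := F '' Γ with hs
  have hsne : s.Nonempty := hne.image F
  obtain ⟨v, hvanti, hvtend, hvmem⟩ := exists_seq_tendsto_sInf hsne (OrderBot.bddBelow s)
  have hchoice : ∀ n, ∃ π, π ∈ Γ ∧ F π = v n := by
    intro n
    obtain ⟨π, hπ, hπF⟩ := hvmem n
    exact ⟨π, hπ, hπF⟩
  choose P hPΓ hPF using hchoice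
  have hmemΓ : ∀ ξ : Measure (X × Y), ξ ∈ Γ ↔ (IsProbabilityMeasure ξ ∧
      ξ.map Prod.fst = μ ∧ ∀ B : Set Y, MeasurableSet B →
        ∫ p in Set.univ ×ˢ B, m p ∂ξ = (∫ p, m p ∂ξ) * (ν B).toReal) := by
    intro ξ
    rw [hΓ]
    exact Iff.rfl
  have hPprob : ∀ n, IsProbabilityMeasure (P n) := fun n => ((hmemΓ _).mp (hPΓ n)).1
  obtain ⟨κ, φ, hφ, hκprob, hrep, hport⟩ := NCK.exists_subseq_rieszM P hPprob
  haveI := hκprob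
  haveI : ∀ n, IsProbabilityMeasure (P n) := hPprob
  -- (a) first marginal
  have hmapfst : κ.map Prod.fst = μ := by
    haveI : IsProbabilityMeasure (κ.map (Prod.fst : X × Y → X)) :=
      Measure.isProbabilityMeasure_map measurable_fst.aemeasurable
    apply ext_of_forall_lintegral_eq_of_IsFiniteMeasure
    intro g
    set G : C(X × Y, ℝ) := ⟨fun p => (g p.1 : ℝ),
      NNReal.continuous_coe.comp ((map_continuous g).comp continuous_fst)⟩ with hG
    set Gx : C(X, ℝ) := ⟨fun x => (g x : ℝ),
      NNReal.continuous_coe.comp (map_continuous g)⟩ with hGx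
    have hGnn : ∀ p, 0 ≤ G p := fun p => (g p.1).coe_nonneg
    have hconst : ∀ n, ∫ p, G p ∂(P n) = ∫ x, (g x : ℝ) ∂μ := by
      intro n
      have hmapn := ((hmemΓ _).mp (hPΓ n)).2.1
      have hgc : Continuous fun x : X => (g x : ℝ) :=
        NNReal.continuous_coe.comp (map_continuous g)
      rw [← hmapn, integral_map measurable_fst.aemeasurable hgc.aestronglyMeasurable]
      rfl
    have hlim := hrep G hGnn
    have hseq : (fun j => ∫ p, G p ∂P (φ j)) = fun _ => ∫ x, (g x : ℝ) ∂μ :=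
      funext fun j => hconst (φ j)
    rw [hseq] at hlim
    have htoReal : (∫⁻ p, ENNReal.ofReal (G p) ∂κ).toReal = ∫ x, (g x : ℝ) ∂μ :=
      (tendsto_nhds_unique tendsto_const_nhds hlim).symm
    have hGcoe : ∀ p : X × Y, (g p.1 : ℝ≥0∞) = ENNReal.ofReal (G p) := fun p =>
      ENNReal.ofReal_coe_nnreal.symm
    have hGxcoe : ∀ x : X, (g x : ℝ≥0∞) = ENNReal.ofReal (Gx x) := fun x =>
      ENNReal.ofReal_coe_nnreal.symm
    rw [lintegral_map (g.continuous.measurable.coe_nnreal_ennreal) measurable_fst]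
    simp_rw [hGcoe, hGxcoe]
    have hμint : ∫ x, (g x : ℝ) ∂μ = (∫⁻ x, ENNReal.ofReal (Gx x) ∂μ).toReal := by
      have hgc : Continuous fun x : X => (g x : ℝ) :=
        NNReal.continuous_coe.comp (map_continuous g)
      rw [integral_eq_lintegral_of_nonneg_ae (Filter.Eventually.of_forall fun x => (g x).coe_nonneg)
        hgc.aestronglyMeasurable]
      rfl
    have hfin1 : ∫⁻ p, ENNReal.ofReal (G p) ∂κ ≠ ⊤ := lintegral_ofReal_cm_ne_top G κ
    have hfin2 : ∫⁻ x, ENNReal.ofReal (Gx x) ∂μ ≠ ⊤ := lintegral_ofReal_cm_ne_top Gx μ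
    rw [← ENNReal.toReal_eq_toReal_iff' hfin1 hfin2]
    rw [htoReal, hμint]
  -- (b) twisted second marginal
  have hρ : ∀ (ξ : Measure (X × Y)), IsProbabilityMeasure ξ → ∀ B : Set Y, MeasurableSet B →
      ((ξ.withDensity fun p => ENNReal.ofReal (m p)).map Prod.snd) B
        = ENNReal.ofReal (∫ p in Set.univ ×ˢ B, m p ∂ξ) := by
    intro ξ hξ B hB
    haveI := hξ
    rw [Measure.map_apply measurable_snd hB, withDensity_apply _ (measurable_snd hB)]
    rw [ofReal_integral_eq_lintegral_ofReal
      (show Integrable m (ξ.restrict (Set.univ ×ˢ B)) from (integrable_cm M ξ).restrict)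
      (Filter.Eventually.of_forall fun p => hm0 p)]
    rw [show (Prod.snd ⁻¹' B : Set (X × Y)) = Set.univ ×ˢ B from Set.univ_prod.symm]
  have hρΓ : ∀ ξ : Measure (X × Y), ξ ∈ Γ →
      (ξ.withDensity fun p => ENNReal.ofReal (m p)).map Prod.snd
        = ENNReal.ofReal (∫ p, m p ∂ξ) • ν := by
    intro ξ hξ
    obtain ⟨hξp, -, hξB⟩ := (hmemΓ ξ).mp hξ
    haveI := hξp
    ext B hB
    rw [hρ ξ hξp B hB, hξB B hB, Measure.smul_apply, smul_eq_mul,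
      ENNReal.ofReal_mul (integral_nonneg hm0), ENNReal.ofReal_toReal (measure_ne_top ν B)]
  have hν : (κ.withDensity fun p => ENNReal.ofReal (m p)).map Prod.snd
      = ENNReal.ofReal (∫ p, m p ∂κ) • ν := by
    haveI hfin : IsFiniteMeasure ((κ.withDensity fun p => ENNReal.ofReal (m p)).map Prod.snd) := by
      constructor
      rw [Measure.map_apply measurable_snd MeasurableSet.univ, Set.preimage_univ,
        withDensity_apply _ MeasurableSet.univ, Measure.restrict_univ]
      exact lt_of_le_of_lt (le_of_eq rfl)
        (lt_of_le_of_ne le_top (lintegral_ofReal_cm_ne_top M κ))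
    apply ext_of_forall_lintegral_eq_of_IsFiniteMeasure
    intro g
    set G2 : C(X × Y, ℝ) := ⟨fun p => (g p.2 : ℝ) * m p,
      (NNReal.continuous_coe.comp ((map_continuous g).comp continuous_snd)).mul hm⟩ with hG2
    set Gy : C(Y, ℝ) := ⟨fun y => (g y : ℝ),
      NNReal.continuous_coe.comp (map_continuous g)⟩ with hGy
    have hG2nn : ∀ p, 0 ≤ G2 p := fun p => mul_nonneg (g p.2).coe_nonneg (hm0 p)
    have hkey : ∀ ξ : Measure (X × Y),
        ∫⁻ y, (g y : ℝ≥0∞) ∂((ξ.withDensity fun p => ENNReal.ofReal (m p)).map Prod.snd)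
          = ∫⁻ p, ENNReal.ofReal (G2 p) ∂ξ := by
      intro ξ
      rw [lintegral_map (g.continuous.measurable.coe_nnreal_ennreal) measurable_snd,
        lintegral_withDensity_eq_lintegral_mul ξ hm.measurable.ennreal_ofReal
          (show Measurable fun p : X × Y => ((g p.2 : ℝ≥0) : ℝ≥0∞) from
            (g.continuous.comp continuous_snd).measurable.coe_nnreal_ennreal)]
      congr 1
      funext p
      simp only [Pi.mul_apply]
      rw [show (G2 p : ℝ) = (g p.2 : ℝ) * m p from rfl,
        ENNReal.ofReal_mul (g p.2).coe_nonneg, ENNReal.ofReal_coe_nnreal, mul_comm]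
    have hνfin : ∫⁻ y, (g y : ℝ≥0∞) ∂ν ≠ ⊤ := by
      have : ∀ y : Y, (g y : ℝ≥0∞) = ENNReal.ofReal (Gy y) := fun y =>
        ENNReal.ofReal_coe_nnreal.symm
      simp_rw [this]
      exact lintegral_ofReal_cm_ne_top Gy ν
    have hmemn : ∀ n, ∫ p, G2 p ∂(P n)
        = (∫ p, m p ∂(P n)) * (∫⁻ y, (g y : ℝ≥0∞) ∂ν).toReal := by
      intro n
      have h1 : ENNReal.ofReal (∫ p, G2 p ∂(P n)) = ∫⁻ p, ENNReal.ofReal (G2 p) ∂(P n) :=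
        ofReal_integral_eq_lintegral_ofReal (integrable_cm G2 (P n))
          (Filter.Eventually.of_forall hG2nn)
      have h2 := hkey (P n)
      rw [hρΓ (P n) (hPΓ n), lintegral_smul_measure] at h2
      have h3 : ENNReal.ofReal (∫ p, G2 p ∂(P n))
          = ENNReal.ofReal (∫ p, m p ∂(P n)) * ∫⁻ y, (g y : ℝ≥0∞) ∂ν := by
        rw [h1, ← h2, smul_eq_mul]
      have := congrArg ENNReal.toReal h3
      rwa [ENNReal.toReal_ofReal (integral_nonneg hG2nn), ENNReal.toReal_mul,
        ENNReal.toReal_ofReal (integral_nonneg hm0)] at this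
    have hlim2 := hrep G2 hG2nn
    have hlimM := hrep M hm0
    have hseq2 : (fun j => ∫ p, G2 p ∂P (φ j))
        = fun j => (∫ p, m p ∂(P (φ j))) * (∫⁻ y, (g y : ℝ≥0∞) ∂ν).toReal :=
      funext fun j => hmemn (φ j)
    rw [hseq2] at hlim2
    have hlimM' : Filter.Tendsto
        (fun j => (∫ p, m p ∂(P (φ j))) * (∫⁻ y, (g y : ℝ≥0∞) ∂ν).toReal) atTop
        (nhds ((∫⁻ p, ENNReal.ofReal (M p) ∂κ).toReal * (∫⁻ y, (g y : ℝ≥0∞) ∂ν).toReal)) :=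
      hlimM.mul_const _
    have huniq : (∫⁻ p, ENNReal.ofReal (G2 p) ∂κ).toReal
        = (∫⁻ p, ENNReal.ofReal (M p) ∂κ).toReal * (∫⁻ y, (g y : ℝ≥0∞) ∂ν).toReal :=
      tendsto_nhds_unique hlim2 hlimM'
    have hmκ : ∫ p, m p ∂κ = (∫⁻ p, ENNReal.ofReal (M p) ∂κ).toReal := by
      rw [integral_eq_lintegral_of_nonneg_ae (Filter.Eventually.of_forall hm0)
        hm.aestronglyMeasurable]
      rfl
    rw [hkey κ, lintegral_smul_measure, smul_eq_mul]
    have hfin1 : ∫⁻ p, ENNReal.ofReal (G2 p) ∂κ ≠ ⊤ := lintegral_ofReal_cm_ne_top G2 κ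
    have hfin2 : ENNReal.ofReal (∫ p, m p ∂κ) * ∫⁻ y, (g y : ℝ≥0∞) ∂ν ≠ ⊤ :=
      ENNReal.mul_ne_top ENNReal.ofReal_ne_top hνfin
    rw [← ENNReal.toReal_eq_toReal_iff' hfin1 hfin2, ENNReal.toReal_mul,
      ENNReal.toReal_ofReal (integral_nonneg hm0), hmκ]
    exact huniq
  have hκB : ∀ B : Set Y, MeasurableSet B →
      ∫ p in Set.univ ×ˢ B, m p ∂κ = (∫ p, m p ∂κ) * (ν B).toReal := by
    intro B hB
    have h1 := hρ κ hκprob B hB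
    rw [hν] at h1
    have h2 := congrArg ENNReal.toReal h1.symm
    rwa [ENNReal.toReal_ofReal (integral_nonneg fun p => hm0 p), Measure.smul_apply,
      smul_eq_mul, ENNReal.toReal_mul, ENNReal.toReal_ofReal (integral_nonneg hm0)] at h2
  have hκΓ : κ ∈ Γ := (hmemΓ κ).mpr ⟨hκprob, hmapfst, hκB⟩
  -- (d) optimality
  have hcm : Measurable fun p : X × Y => c p - Cl := hc.measurable.sub measurable_const
  have hopen : ∀ t : ℝ, IsOpen {p : X × Y | t < c p - Cl} := by
    intro t
    have hset : {p : X × Y | t < c p - Cl} = c ⁻¹' Set.Ioi (t + Cl) := by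
      ext p
      simp [lt_sub_iff_add_lt]
    rw [hset]
    exact hc.isOpen_preimage (t + Cl)
  have hlayer : ∀ ξ : Measure (X × Y), F ξ = ∫⁻ t in Set.Ioi (0 : ℝ), ξ {p | t < c p - Cl} :=
    fun ξ => lintegral_eq_lintegral_meas_lt ξ
      (Filter.Eventually.of_forall fun p => sub_nonneg.mpr (hCl p)) hcm.aemeasurable
  have hFκ : F κ ≤ sInf s := by
    rw [hlayer κ]
    have step1 : ∫⁻ t in Set.Ioi (0 : ℝ), κ {p | t < c p - Cl}
        ≤ ∫⁻ t in Set.Ioi (0 : ℝ), liminf (fun j => P (φ j) {p | t < c p - Cl}) atTop :=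
      lintegral_mono fun t => hport _ (hopen t)
    have step2 : ∫⁻ t in Set.Ioi (0 : ℝ), liminf (fun j => P (φ j) {p | t < c p - Cl}) atTop
        ≤ liminf (fun j => ∫⁻ t in Set.Ioi (0 : ℝ), P (φ j) {p | t < c p - Cl}) atTop := by
      refine lintegral_liminf_le fun j => ?_
      exact Antitone.measurable fun t t' htt' =>
        measure_mono fun p hp => lt_of_le_of_lt htt' hp
    have step3 : liminf (fun j => ∫⁻ t in Set.Ioi (0 : ℝ), P (φ j) {p | t < c p - Cl}) atTop
        = sInf s := by
      have heq : (fun j => ∫⁻ t in Set.Ioi (0 : ℝ), P (φ j) {p | t < c p - Cl})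
          = fun j => v (φ j) := by
        funext j
        rw [← hlayer (P (φ j)), hPF (φ j)]
      rw [heq]
      exact (hvtend.comp hφ.tendsto_atTop).liminf_eq
    exact le_trans step1 (le_trans step2 (le_of_eq step3))
  refine ⟨κ, hκΓ, fun π hπ => ?_⟩
  exact le_trans hFκ (sInf_le ⟨π, hπ, rfl⟩)
end

section
/- Let X, Y be compact metric spaces, μ ∈ P(X), ν ∈ P(Y), c : X × Y → ℝ bounded, m : X × Y → (0,∞) bounded with inf m > 0. Suppose the measure ν̃ on Y defined by ν̃(B) = (1/Z) ∫_B (∫_X m(x,y) μ(dx))^{-1} ν(dy) is well-defined with normalization constant 0 < Z < ∞. Then the product measure μ ⊗ ν̃ belongs to Γ_m(μ, ν). -/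
open MeasureTheory

/-- Feasibility of the non-conservative Kantorovich problem.
If the renormalized measure `ν̃` (with density `(∫ m(x,·) dμ)⁻¹ / Z` w.r.t. `ν`)
is a well-defined probability measure, then `μ ⊗ ν̃ ∈ Γ_m(μ, ν)`. -/
theorem product_with_renormalized_target_is_feasible
    {X Y : Type*} [MetricSpace X] [CompactSpace X]
    [MeasurableSpace X] [BorelSpace X]
    [MetricSpace Y] [CompactSpace Y] [MeasurableSpace Y] [BorelSpace Y]
    (μ : Measure X) (ν : Measure Y)
    [IsProbabilityMeasure μ] [IsProbabilityMeasure ν]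
    (m : X × Y → ℝ) (hm : Measurable m)
    (ε : ℝ) (hε : 0 < ε) (hmlb : ∀ p, ε ≤ m p)
    (Cm : ℝ) (hmub : ∀ p, m p ≤ Cm)
    (Z : ℝ) (hZ : 0 < Z)
    (νt : Measure Y)
    (hνt : νt = (ENNReal.ofReal Z)⁻¹ •
      ν.withDensity (fun y => ENNReal.ofReal (∫ x, m (x, y) ∂μ)⁻¹))
    (hνtprob : IsProbabilityMeasure νt) :
    IsProbabilityMeasure (μ.prod νt) ∧
    (μ.prod νt).map Prod.fst = μ ∧
    ∀ B : Set Y, MeasurableSet B →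
      ∫ p in Set.univ ×ˢ B, m p ∂(μ.prod νt) =
        (∫ p, m p ∂(μ.prod νt)) * (ν B).toReal := by
  -- basic facts about f y := ∫ x, m (x, y) ∂μ
  set f : Y → ℝ := fun y => ∫ x, m (x, y) ∂μ with hf
  have hfpos : ∀ y, 0 < f y := by
    intro y
    have : ε = ∫ _ : X, ε ∂μ := by simp
    calc (0 : ℝ) < ε := hε
      _ = ∫ _ : X, ε ∂μ := this
      _ ≤ f y := by
        apply integral_mono (integrable_const ε) _ (fun x => hmlb (x, y))
        apply MeasureTheory.Integrable.mono' (integrable_const Cm)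
        · exact (hm.comp measurable_prodMk_right).aestronglyMeasurable
        · filter_upwards with x
          rw [Real.norm_eq_abs, abs_of_pos (lt_of_lt_of_le hε (hmlb _))]
          exact hmub _
  have hfmeas : Measurable f :=
    hm.stronglyMeasurable.integral_prod_left'.measurable
  -- integrability of m on the product
  have hmint : Integrable m (μ.prod νt) := by
    apply MeasureTheory.Integrable.mono' (integrable_const Cm)
    · exact hm.aestronglyMeasurable
    · filter_upwards with p
      rw [Real.norm_eq_abs, abs_of_pos (lt_of_lt_of_le hε (hmlb _))]
      exact hmub _
  -- key computation: for measurable B, ∫ over univ ×ˢ B equals Z⁻¹ * ν B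
  have key : ∀ B : Set Y, MeasurableSet B →
      ∫ p in Set.univ ×ˢ B, m p ∂(μ.prod νt) = Z⁻¹ * (ν B).toReal := by
    intro B hB
    have hres : (μ.prod νt).restrict (Set.univ ×ˢ B) = μ.prod (νt.restrict B) := by
      rw [← Measure.prod_restrict, Measure.restrict_univ]
    rw [show ∫ p in Set.univ ×ˢ B, m p ∂(μ.prod νt)
        = ∫ p, m p ∂(μ.prod (νt.restrict B)) from by rw [← hres]]
    have hint' : Integrable m (μ.prod (νt.restrict B)) := by
      rw [← hres]
      exact hmint.restrict
    rw [integral_prod_symm m hint']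
    -- now ∫ y, f y ∂(νt.restrict B)
    have : ∀ y, (∫ x, m (x, y) ∂μ) = f y := fun y => rfl
    simp_rw [this]
    rw [hνt, Measure.restrict_smul, integral_smul_measure]
    set g : Y → NNReal := fun y => Real.toNNReal (f y)⁻¹ with hg
    have hgmeas : AEMeasurable g (ν.restrict B) :=
      (measurable_real_toNNReal.comp hfmeas.inv).aemeasurable
    have hwd : (fun y => ENNReal.ofReal (f y)⁻¹) = fun y => ((g y : ENNReal)) := rfl
    rw [hwd, setIntegral_withDensity_eq_setIntegral_smul₀ hgmeas f hB]
    have hone : ∀ y, g y • f y = 1 := by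
      intro y
      rw [NNReal.smul_def, hg]
      simp only [Real.coe_toNNReal _ (inv_nonneg.2 (hfpos y).le)]
      exact inv_mul_cancel₀ (ne_of_gt (hfpos y))
    simp_rw [hone]
    rw [setIntegral_const]
    simp [ENNReal.toReal_inv, ENNReal.toReal_ofReal hZ.le, smul_eq_mul, measureReal_def]
  refine ⟨by infer_instance, ?_, ?_⟩
  · simp [Measure.map_fst_prod]
  · intro B hB
    have htot : (∫ p, m p ∂(μ.prod νt)) = Z⁻¹ := by
      have := key Set.univ MeasurableSet.univ
      rw [Set.univ_prod_univ, setIntegral_univ] at this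
      simpa using this
    rw [key B hB, htot]
end

section
/- Let X, Y be compact metric spaces, c : X × Y → ℝ continuous, m : X × Y → ℝ continuous with m_min := inf m > 0. Let (φ, ψ) be an admissible pair for the non-conservative dual problem satisfying φ(x) = inf_y ( c(x,y) − ψ(y)·m(x,y) ), ψ(y) = inf_x ( (c(x,y) − φ(x))/m(x,y) ), ∫ ψ dν = 0, and such that there exists y* with ψ(y*) ≥ 0 and x* with φ(x*) ≥ inf c. Then with c_max := sup c and c_min := inf c: (i) φ(x) ≤ c_max for all x; (ii) ψ(y) ≥ (c_min − c_max)/m_min for all y; (iii) ψ(y) ≤ (c_max − c_min)/m_min for all y. -/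
open MeasureTheory

/-- Uniform a priori bounds on optimal dual potentials:
if `(φ, ψ)` is admissible, `φ` and `ψ` are the mutual generalized transforms,
`∫ψ dν = 0`, `ψ(y*) ≥ 0` for some `y*`, and `φ(x*) ≥ inf c` for some `x*`, then
`φ ≤ sup c`, and `(inf c − sup c)/inf m ≤ ψ ≤ (sup c − inf c)/inf m`. -/
theorem dual_potentials_uniform_bounds
    {X Y : Type*} [MetricSpace X] [CompactSpace X] [Nonempty X]
    [MetricSpace Y] [CompactSpace Y] [Nonempty Y]
    [MeasurableSpace Y] [BorelSpace Y]
    (ν : Measure Y) [IsProbabilityMeasure ν]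
    (c : X × Y → ℝ) (hc : Continuous c)
    (m : X × Y → ℝ) (hm : Continuous m)
    (mmin : ℝ) (hmmin : mmin = ⨅ p : X × Y, m p) (hmminpos : 0 < mmin)
    (cmax : ℝ) (hcmax : cmax = ⨆ p : X × Y, c p)
    (cmin : ℝ) (hcmin : cmin = ⨅ p : X × Y, c p)
    (φ : X → ℝ) (ψ : Y → ℝ) (hφ : Continuous φ) (hψ : Continuous ψ)
    (hψν : ∫ y, ψ y ∂ν = 0)
    (hadm : ∀ x y, φ x + (ψ y - ∫ b, ψ b ∂ν) * m (x, y) ≤ c (x, y))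
    (hφdef : ∀ x, φ x = ⨅ y : Y, (c (x, y) - ψ y * m (x, y)))
    (hψdef : ∀ y, ψ y = ⨅ x : X, (c (x, y) - φ x) / m (x, y))
    (hystar : ∃ ystar, 0 ≤ ψ ystar)
    (hxstar : ∃ xstar, cmin ≤ φ xstar) :
    (∀ x, φ x ≤ cmax) ∧
    (∀ y, (cmin - cmax) / mmin ≤ ψ y) ∧
    (∀ y, ψ y ≤ (cmax - cmin) / mmin) := by
  obtain ⟨ystar, hys⟩ := hystar
  obtain ⟨xstar, hxs⟩ := hxstar
  have hmlb : ∀ p : X × Y, mmin ≤ m p := by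
    intro p
    rw [hmmin]
    exact ciInf_le (isCompact_range hm).bddBelow p
  have hcub : ∀ p : X × Y, c p ≤ cmax := by
    intro p
    rw [hcmax]
    exact le_ciSup (isCompact_range hc).bddAbove p
  have hclb : ∀ p : X × Y, cmin ≤ c p := by
    intro p
    rw [hcmin]
    exact ciInf_le (isCompact_range hc).bddBelow p
  have hmpos : ∀ p : X × Y, 0 < m p := fun p => lt_of_lt_of_le hmminpos (hmlb p)
  have hcc : cmin ≤ cmax := le_trans (hclb (Classical.arbitrary _)) (hcub (Classical.arbitrary _))
  -- (i)
  have hφub : ∀ x, φ x ≤ cmax := by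
    intro x
    rw [hφdef x]
    have hcont : Continuous fun y : Y => c (x, y) - ψ y * m (x, y) := by fun_prop
    have h1 : (⨅ y : Y, (c (x, y) - ψ y * m (x, y))) ≤ c (x, ystar) - ψ ystar * m (x, ystar) :=
      ciInf_le (isCompact_range hcont).bddBelow ystar
    have h2 : 0 ≤ ψ ystar * m (x, ystar) := mul_nonneg hys (hmpos _).le
    have := hcub (x, ystar)
    linarith
  refine ⟨hφub, ?_, ?_⟩
  · intro y
    rw [hψdef y]
    refine le_ciInf fun x => ?_
    have hM := hmlb (x, y)
    have hMpos := hmpos (x, y)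
    have hN : cmin - cmax ≤ c (x, y) - φ x := by
      have := hclb (x, y); have := hφub x; linarith
    rw [div_le_div_iff₀ hmminpos hMpos]
    nlinarith [hclb (x, y), hφub x]
  · intro y
    have hcont : Continuous fun x : X => (c (x, y) - φ x) / m (x, y) := by
      apply Continuous.div (by fun_prop) (by fun_prop)
      exact fun x => (hmpos (x, y)).ne'
    have h1 : ψ y ≤ (c (xstar, y) - φ xstar) / m (xstar, y) := by
      rw [hψdef y]
      exact ciInf_le (isCompact_range hcont).bddBelow xstar
    have hM := hmlb (xstar, y)
    have hMpos := hmpos (xstar, y)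
    have h2 : (c (xstar, y) - φ xstar) / m (xstar, y) ≤ (cmax - cmin) / mmin := by
      rw [div_le_div_iff₀ hMpos hmminpos]
      nlinarith [hcub (xstar, y)]
    linarith
end

section
/- Let X, Y be compact metric spaces, μ ∈ P(X), ν ∈ P(Y), m : X × Y → (0,∞) measurable and bounded. Suppose π* ∈ Γ_m(μ,ν) and bounded measurable functions (φ, ψ) with ∫ ψ dν = 0 satisfy the admissibility inequality c(x,y) ≥ φ(x) + ψ(y)·m(x,y) for all (x,y), and ∫ φ dμ = ∫ c dπ*. Then π* is concentrated on the set S = { (x,y) : c(x,y) = φ(x) + ψ(y)·m(x,y) }, i.e. π*(Sᶜ) = 0. -/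
open MeasureTheory

/-- If the primal value equals the dual value
(`∫ φ dμ = ∫ c dπ*`) for an admissible pair `(φ, ψ)` with `∫ψ dν = 0`, then the
optimal plan `π*` is concentrated on the contact set
`S = {(x,y) : c(x,y) = φ(x) + ψ(y) m(x,y)}`. -/
theorem optimal_plan_concentrated_on_contact_set
    {X Y : Type*} [MetricSpace X] [CompactSpace X]
    [MeasurableSpace X] [BorelSpace X]
    [MetricSpace Y] [CompactSpace Y] [MeasurableSpace Y] [BorelSpace Y]
    (μ : Measure X) (ν : Measure Y)
    [IsProbabilityMeasure μ] [IsProbabilityMeasure ν]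
    (c : X × Y → ℝ) (hc : Continuous c)
    (m : X × Y → ℝ) (hm : Measurable m)
    (hmpos : ∀ p, 0 < m p) (Cm : ℝ) (hmub : ∀ p, m p ≤ Cm)
    (π : Measure (X × Y)) [IsProbabilityMeasure π]
    (hfst : π.map Prod.fst = μ)
    (hsnd : ∀ B : Set Y, MeasurableSet B →
      ∫ p in Set.univ ×ˢ B, m p ∂π = (∫ p, m p ∂π) * (ν B).toReal)
    (φ : X → ℝ) (ψ : Y → ℝ) (hφ : Measurable φ) (hψ : Measurable ψ)
    (Cφ : ℝ) (hφbd : ∀ x, |φ x| ≤ Cφ) (Cψ : ℝ) (hψbd : ∀ y, |ψ y| ≤ Cψ)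
    (hψν : ∫ y, ψ y ∂ν = 0)
    (hadm : ∀ x y, φ x + ψ y * m (x, y) ≤ c (x, y))
    (hdual : ∫ x, φ x ∂μ = ∫ p, c p ∂π) :
    π {p : X × Y | c p ≠ φ p.1 + ψ p.2 * m p} = 0 := by
  -- the weighted measure
  set ρ : Measure (X × Y) := π.withDensity (fun p => ENNReal.ofReal (m p)) with hρ
  have hm_int : Integrable m π := by
    refine (integrable_const Cm).mono' hm.aestronglyMeasurable ?_
    filter_upwards with p
    rw [Real.norm_eq_abs, abs_of_pos (hmpos p)]
    exact hmub p
  have hmnn : (0:X × Y → ℝ) ≤ᵐ[π] m := Filter.Eventually.of_forall fun p => (hmpos p).le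
  -- the modified second marginal
  have hmap : ρ.map Prod.snd = (ENNReal.ofReal (∫ p, m p ∂π)) • ν := by
    ext B hB
    rw [Measure.map_apply measurable_snd hB, Measure.smul_apply, smul_eq_mul]
    have hpre : Prod.snd ⁻¹' B = (Set.univ : Set X) ×ˢ B := by
      ext p; simp [Set.mem_prod]
    rw [hρ, withDensity_apply _ (measurable_snd hB), hpre,
      ← ofReal_integral_eq_lintegral_ofReal (hm_int.restrict)
        (ae_restrict_of_ae hmnn),
      hsnd B hB, ENNReal.ofReal_mul (integral_nonneg fun p => (hmpos p).le),
      ENNReal.ofReal_toReal (measure_ne_top ν B)]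
  -- integral of ψ(y) m(x,y) against π equals 0
  have hψm : ∫ p, ψ p.2 * m p ∂π = 0 := by
    have h1 : ∫ p, ψ p.2 * m p ∂π = ∫ p, ψ p.2 ∂ρ := by
      rw [hρ]
      have heq : (fun p : X × Y => ENNReal.ofReal (m p))
          = fun p => ((m p).toNNReal : ENNReal) := rfl
      rw [heq, integral_withDensity_eq_integral_smul
        (f := fun p => (m p).toNNReal)
        (measurable_real_toNNReal.comp hm) (fun p => ψ p.2)]
      congr 1
      funext p
      rw [NNReal.smul_def, Real.coe_toNNReal _ (hmpos p).le, smul_eq_mul, mul_comm]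
    have h2 : ∫ p, ψ p.2 ∂ρ = ∫ y, ψ y ∂(ρ.map Prod.snd) := by
      rw [integral_map measurable_snd.aemeasurable hψ.aestronglyMeasurable]
    rw [h1, h2, hmap, integral_smul_measure, hψν, smul_zero]
  -- integral of φ(x) against π
  have hφπ : ∫ p, φ p.1 ∂π = ∫ x, φ x ∂μ := by
    rw [← hfst, integral_map measurable_fst.aemeasurable hφ.aestronglyMeasurable]
  -- integrability of the pieces
  have hφ_int : Integrable (fun p : X × Y => φ p.1) π := by
    refine (integrable_const Cφ).mono' (hφ.comp measurable_fst).aestronglyMeasurable ?_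
    filter_upwards with p using hφbd p.1
  have hψm_int : Integrable (fun p : X × Y => ψ p.2 * m p) π := by
    have hY : Nonempty Y := by
      by_contra h
      rw [not_nonempty_iff] at h
      have h1 : ν Set.univ = 1 := measure_univ
      rw [Set.univ_eq_empty_iff.mpr h, measure_empty] at h1
      exact one_ne_zero h1.symm
    have hCψ : 0 ≤ Cψ := le_trans (abs_nonneg _) (hψbd (Classical.arbitrary Y))
    refine (integrable_const (Cψ * Cm)).mono'
      ((hψ.comp measurable_snd).mul hm).aestronglyMeasurable ?_
    filter_upwards with p
    rw [Real.norm_eq_abs, abs_mul, abs_of_pos (hmpos p)]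
    exact mul_le_mul (hψbd p.2) (hmub p) (hmpos p).le hCψ
  have hc_int : Integrable c π :=
    hc.integrable_of_hasCompactSupport
      (IsCompact.of_isClosed_subset isCompact_univ (isClosed_tsupport _) (Set.subset_univ _))
  -- nonnegative function with zero integral
  have hg_int : Integrable (fun p : X × Y => φ p.1 + ψ p.2 * m p) π := hφ_int.add hψm_int
  have hf_nonneg : ∀ p : X × Y, 0 ≤ c p - (φ p.1 + ψ p.2 * m p) :=
    fun p => sub_nonneg.2 (hadm p.1 p.2)
  have hf_int : Integrable (fun p : X × Y => c p - (φ p.1 + ψ p.2 * m p)) π :=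
    hc_int.sub hg_int
  have hf_integral : ∫ p, (c p - (φ p.1 + ψ p.2 * m p)) ∂π = 0 := by
    rw [integral_sub hc_int hg_int, integral_add hφ_int hψm_int, hψm, hφπ, hdual]
    ring
  have hae : (fun p : X × Y => c p - (φ p.1 + ψ p.2 * m p)) =ᵐ[π] 0 :=
    (integral_eq_zero_iff_of_nonneg hf_nonneg hf_int).mp hf_integral
  rw [Filter.EventuallyEq, ae_iff] at hae
  refine measure_mono_null (fun p hp => ?_) hae
  simp only [Set.mem_setOf_eq, Pi.zero_apply] at *
  intro h
  exact hp (by linarith [sub_eq_zero.mp h])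
end

section
/- Let h, d : [0,∞) → ℝ be smooth functions, k ≥ 0, ε > 0, H̄ > 0, and suppose for all z in (0, D]: h″(z) > ε·d″(z) ≥ 0, h′(z) > ε·d′(z) ≥ 0, and k < ε/(2H̄). Then for any constant v with v ≥ −2H̄, the function F(z) = h′(z) + k·d′(z)·(h(z) + v') with h(z) − φ ≥ −2H̄ replaced concretely: F(z) := h′(z) + k·d′(z)·c̃(z) where c̃ : (0,D] → ℝ satisfies c̃(z) ≥ −2H̄, c̃′(z) = h′(z), is strictly positive and strictly increasing on (0, D]. -/
/-- Monotonicity lemma for the perturbative regime: with smooth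
`h, d` satisfying `h″ > ε d″ ≥ 0`, `h′ > ε d′ ≥ 0` on `(0, D]`, `0 ≤ k < ε/(2H̄)`,
and `c̃` with `c̃ ≥ −2H̄` and `c̃′ = h′` on `(0, D]`, the function
`F(z) = h′(z) + k d′(z) c̃(z)` is strictly positive and strictly increasing on
`(0, D]`. -/
theorem perturbative_characteristic_function_pos_strictMono
    (h d ct : ℝ → ℝ) (k ε Hbar D : ℝ)
    (hh : ContDiff ℝ (⊤ : ℕ∞) h) (hd : ContDiff ℝ (⊤ : ℕ∞) d)
    (hk0 : 0 ≤ k) (hε : 0 < ε) (hH : 0 < Hbar) (hD : 0 < D)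
    (hkε : k < ε / (2 * Hbar))
    (hh2 : ∀ z ∈ Set.Ioc (0 : ℝ) D, ε * deriv (deriv d) z < deriv (deriv h) z)
    (hd2 : ∀ z ∈ Set.Ioc (0 : ℝ) D, 0 ≤ deriv (deriv d) z)
    (hh1 : ∀ z ∈ Set.Ioc (0 : ℝ) D, ε * deriv d z < deriv h z)
    (hd1 : ∀ z ∈ Set.Ioc (0 : ℝ) D, 0 ≤ deriv d z)
    (hct : ∀ z ∈ Set.Ioc (0 : ℝ) D, HasDerivAt ct (deriv h z) z)
    (hctlb : ∀ z ∈ Set.Ioc (0 : ℝ) D, -(2 * Hbar) ≤ ct z) :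
    (∀ z ∈ Set.Ioc (0 : ℝ) D, 0 < deriv h z + k * deriv d z * ct z) ∧
    StrictMonoOn (fun z => deriv h z + k * deriv d z * ct z) (Set.Ioc 0 D) := by
  have hk2 : 2 * Hbar * k < ε := by
    have := (lt_div_iff₀ (by positivity : (0:ℝ) < 2 * Hbar)).mp hkε
    nlinarith
  have hh' : ContDiff ℝ (⊤:ℕ∞) (deriv h) := (contDiff_infty_iff_deriv.mp (hh.of_le (by simp))).2
  have hd' : ContDiff ℝ (⊤:ℕ∞) (deriv d) := (contDiff_infty_iff_deriv.mp (hd.of_le (by simp))).2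
  -- positivity
  have hpos : ∀ z ∈ Set.Ioc (0 : ℝ) D, 0 < deriv h z + k * deriv d z * ct z := by
    intro z hz
    have h1 := hh1 z hz
    have h2 := hd1 z hz
    have h3 := hctlb z hz
    nlinarith [mul_nonneg hk0 h2, mul_nonneg (mul_nonneg hk0 h2) (by linarith : (0:ℝ) ≤ ct z + 2 * Hbar)]
  refine ⟨hpos, ?_⟩
  have hcont : ContinuousOn (fun z => deriv h z + k * deriv d z * ct z) (Set.Ioc 0 D) := by
    intro z hz
    exact (((hh'.continuous.continuousAt).add
      ((continuousAt_const.mul hd'.continuous.continuousAt).mul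
        (hct z hz).continuousAt))).continuousWithinAt
  apply strictMonoOn_of_deriv_pos (convex_Ioc 0 D) hcont
  intro z hz
  rw [interior_Ioc] at hz
  have hz' : z ∈ Set.Ioc (0 : ℝ) D := Set.Ioo_subset_Ioc_self hz
  have hF : HasDerivAt (fun z => deriv h z + k * deriv d z * ct z)
      (deriv (deriv h) z + (k * deriv (deriv d) z * ct z + k * deriv d z * deriv h z)) z := by
    have H1 : HasDerivAt (deriv h) (deriv (deriv h) z) z :=
      (hh'.differentiable (by norm_num) z).hasDerivAt
    have H2 : HasDerivAt (deriv d) (deriv (deriv d) z) z :=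
      (hd'.differentiable (by norm_num) z).hasDerivAt
    have H3 := ((H2.const_mul k).mul (hct z hz'))
    exact H1.add H3
  rw [hF.deriv]
  have h1 := hh2 z hz'
  have h2 := hd2 z hz'
  have h3 := hctlb z hz'
  have h4 := hd1 z hz'
  have h5 := hh1 z hz'
  have h6 : 0 ≤ k * deriv d z * deriv h z :=
    mul_nonneg (mul_nonneg hk0 h4) (by nlinarith)
  nlinarith [mul_nonneg hk0 h2, mul_nonneg (mul_nonneg hk0 h2) (by linarith : (0:ℝ) ≤ ct z + 2 * Hbar)]
end
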